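/- Fix a real λ > c₂. Assume there are constants b > 0 with ‖T₁₂† x‖ ≥ b‖x‖ for all x ∈ D(T₁₂†), d ≥ 0 with re⟪y, (λ·I − T₂₂)⁻¹ y⟫ ≥ d‖y‖² for all y ∈ H₂, c₁ ∈ ℝ with re⟪x, T₁₁ x⟫ ≥ c₁‖x‖² for all x ∈ D(T₁₂†), and δ ∈ ℝ with δ < d·b² + c₁ − λ. Then for every nonzero x ∈ D(T₁₂†) one has re⟪x, T₁₁ x⟫ − λ‖x‖² + re⟪T₁₂† x, (λ·I − T₂₂)⁻¹(T₁₂† x)⟫ > δ‖x‖². In particular, if δ ≥ 0, the minimal Schur complement S₁(λ) x = T₁₁ x − λ x − T₁₂((T₂₂ − λ·I)⁻¹(T₁₂† x)), defined for x ∈ D(T₁₂†) with (T₂₂ − λ·I)⁻¹(T₁₂† x) ∈ D(T₁₂), is injective. -/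

import Mathlib

/-! The quadratic form `x ↦ re⟪x, T₁₁ x⟫ - λ‖x‖² + re⟪T₁₂† x, (λ - T₂₂)⁻¹ T₁₂† x⟫` is bounded
below by `(d b² + c₁ - λ)‖x‖²`: the first term by `c₁‖x‖²`, the last by `d ‖T₁₂† x‖² ≥ d b² ‖x‖²`.
If `S₁(λ) x = 0`, pairing this equation with `x` and moving `T₁₂` across the inner product turns
`⟪x, T₁₁ x⟫` into `λ‖x‖² - ⟪T₁₂† x, (λ - T₂₂)⁻¹ T₁₂† x⟫`, so the form vanishes at `x`; with
`δ ≥ 0` the strict lower bound forces `x = 0`. -/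

theorem Ring.inverse_neg {M : Type*} [MonoidWithZero M] [HasDistribNeg M] (a : M) :
    Ring.inverse (-a) = -Ring.inverse a := by
  by_cases ha : IsUnit a
  · obtain ⟨u, rfl⟩ := ha
    rw [← Units.val_neg, Ring.inverse_unit, Ring.inverse_unit, inv_neg, Units.val_neg]
  · have hna : ¬IsUnit (-a) := fun h => ha (by simpa using h.neg)
    rw [Ring.inverse_non_unit _ ha, Ring.inverse_non_unit _ hna, neg_zero]

section

variable {𝕜 E F : Type*} [RCLike 𝕜]

theorem mul_sq_mul_norm_sq_le_re_inner_comp [SeminormedAddCommGroup E] [NormedAddCommGroup F]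
    [InnerProductSpace 𝕜 F] {A : E → F} {R : F → F} {b d : ℝ} (hb : 0 ≤ b) (hd : 0 ≤ d)
    (hA : ∀ x, b * ‖x‖ ≤ ‖A x‖) (hR : ∀ y, d * ‖y‖ ^ 2 ≤ RCLike.re (inner 𝕜 y (R y))) (x : E) :
    d * b ^ 2 * ‖x‖ ^ 2 ≤ RCLike.re (inner 𝕜 (A x) (R (A x))) := by
  have hsq : (b * ‖x‖) ^ 2 ≤ ‖A x‖ ^ 2 := pow_le_pow_left₀ (by positivity) (hA x) 2
  calc d * b ^ 2 * ‖x‖ ^ 2 = d * (b * ‖x‖) ^ 2 := by ring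
    _ ≤ d * ‖A x‖ ^ 2 := mul_le_mul_of_nonneg_left hsq hd
    _ ≤ _ := hR (A x)

theorem LinearPMap.re_inner_eq_of_sub_smul_sub_eq_zero [NormedAddCommGroup E]
    [InnerProductSpace 𝕜 E] [NormedAddCommGroup F] [InnerProductSpace 𝕜 F] [CompleteSpace E]
    {T : E →ₗ.[𝕜] F} (hT : Dense (T.domain : Set E)) {x : T.adjoint.domain} {y : T.domain}
    {z : F} (μ : ℝ) (h : z - (μ : 𝕜) • (x : F) - T y = 0) :
    RCLike.re (inner 𝕜 (x : F) z) =
      μ * ‖(x : F)‖ ^ 2 + RCLike.re (inner 𝕜 (T.adjoint x) (y : E)) := by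
  rw [sub_sub, sub_eq_zero] at h
  rw [h, inner_add_right, inner_smul_right, ← LinearPMap.adjoint_isFormalAdjoint hT x y,
    inner_self_eq_norm_sq_to_K, ← RCLike.ofReal_pow, ← RCLike.ofReal_mul,
    AddMonoidHom.map_add, RCLike.ofReal_re]

end

theorem stmt_8_general {H₁ H₂ : Type*}
    [NormedAddCommGroup H₁] [InnerProductSpace ℂ H₁]
    [NormedAddCommGroup H₂] [InnerProductSpace ℂ H₂] [CompleteSpace H₂]
    (T12 : H₂ →ₗ.[ℂ] H₁) (hdense : Dense (T12.domain : Set H₂))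
    (T22 : H₂ →L[ℂ] H₂)
    (T11 : T12.adjoint.domain →ₗ[ℂ] H₁)
    (lam : ℝ)
    (b : ℝ) (hb : 0 < b) (hbb : ∀ x : T12.adjoint.domain, b * ‖(x : H₁)‖ ≤ ‖T12.adjoint x‖)
    (d : ℝ) (hd : 0 ≤ d)
    (hdd : ∀ y : H₂, d * ‖y‖ ^ 2 ≤
      (inner ℂ y (Ring.inverse ((lam : ℂ) • (1 : H₂ →L[ℂ] H₂) - T22) y) : ℂ).re)
    (c₁ : ℝ) (hc1 : ∀ x : T12.adjoint.domain,
      c₁ * ‖(x : H₁)‖ ^ 2 ≤ (inner ℂ (x : H₁) (T11 x) : ℂ).re)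
    (δ : ℝ) (hδ : δ < d * b ^ 2 + c₁ - lam) :
    (∀ x : T12.adjoint.domain, (x : H₁) ≠ 0 →
      δ * ‖(x : H₁)‖ ^ 2 <
        (inner ℂ (x : H₁) (T11 x) : ℂ).re - lam * ‖(x : H₁)‖ ^ 2 +
        (inner ℂ (T12.adjoint x)
          (Ring.inverse ((lam : ℂ) • (1 : H₂ →L[ℂ] H₂) - T22) (T12.adjoint x)) : ℂ).re) ∧
    (0 ≤ δ → ∀ (x : T12.adjoint.domain)
      (hm : Ring.inverse (T22 - (lam : ℂ) • (1 : H₂ →L[ℂ] H₂)) (T12.adjoint x) ∈ T12.domain),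
      T11 x - (lam : ℂ) • (x : H₁) -
        T12 ⟨Ring.inverse (T22 - (lam : ℂ) • (1 : H₂ →L[ℂ] H₂)) (T12.adjoint x), hm⟩ = 0 →
      (x : H₁) = 0) := by
  set R := Ring.inverse ((lam : ℂ) • (1 : H₂ →L[ℂ] H₂) - T22)
  have lower_bound : ∀ x : T12.adjoint.domain, (x : H₁) ≠ 0 →
      δ * ‖(x : H₁)‖ ^ 2 < (inner ℂ (x : H₁) (T11 x) : ℂ).re - lam * ‖(x : H₁)‖ ^ 2 +
        (inner ℂ (T12.adjoint x) (R (T12.adjoint x)) : ℂ).re := by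
    intro x hx
    have hx2 : 0 < ‖(x : H₁)‖ ^ 2 := by positivity
    have hδx := mul_lt_mul_of_pos_right hδ hx2
    have hR := mul_sq_mul_norm_sq_le_re_inner_comp (𝕜 := ℂ) hb.le hd hbb hdd x
    rw [RCLike.re_to_complex, Submodule.coe_norm] at hR
    linarith [hc1 x]
  refine ⟨lower_bound, fun hδ0 x hm hS => by_contra fun hx => ?_⟩
  have hinv : Ring.inverse (T22 - (lam : ℂ) • (1 : H₂ →L[ℂ] H₂)) = -R := by
    rw [← neg_sub, Ring.inverse_neg]
  have hform := LinearPMap.re_inner_eq_of_sub_smul_sub_eq_zero hdense lam hS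
  simp only [hinv, neg_apply, inner_neg_right, map_neg, RCLike.re_to_complex] at hform
  linarith [lower_bound x hx, mul_nonneg hδ0 (sq_nonneg ‖(x : H₁)‖)]

/-- Under the lower bounds `‖T₁₂†x‖ ≥ b‖x‖`, `re⟪y, (λ−T₂₂)⁻¹y⟫ ≥ d‖y‖²`,
`re⟪x, T₁₁x⟫ ≥ c₁‖x‖²` and `δ < d·b² + c₁ − λ`, one has
`re⟪x, T₁₁x⟫ − λ‖x‖² + re⟪T₁₂†x, (λ−T₂₂)⁻¹(T₁₂†x)⟫ > δ‖x‖²` for all nonzero `x ∈ D(T₁₂†)`;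
in particular if `δ ≥ 0` the minimal Schur complement `S₁(λ)` is injective. -/
theorem stmt_8 {H₁ H₂ : Type*}
    [NormedAddCommGroup H₁] [InnerProductSpace ℂ H₁] [CompleteSpace H₁]
    [NormedAddCommGroup H₂] [InnerProductSpace ℂ H₂] [CompleteSpace H₂]
    (T12 : H₂ →ₗ.[ℂ] H₁) (hdense : Dense (T12.domain : Set H₂)) (hclosed : T12.IsClosed)
    (T22 : H₂ →L[ℂ] H₂) (hT22 : IsSelfAdjoint T22)
    (c₂ : ℝ) (hc2 : ∀ y : H₂, (inner ℂ y (T22 y) : ℂ).re ≤ c₂ * ‖y‖ ^ 2)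
    (T11 : T12.adjoint.domain →ₗ[ℂ] H₁)
    (hsymm : ∀ x x' : T12.adjoint.domain,
      (inner ℂ (x : H₁) (T11 x') : ℂ) = inner ℂ (T11 x) (x' : H₁))
    (lam : ℝ) (hlam : c₂ < lam)
    (b : ℝ) (hb : 0 < b) (hbb : ∀ x : T12.adjoint.domain, b * ‖(x : H₁)‖ ≤ ‖T12.adjoint x‖)
    (d : ℝ) (hd : 0 ≤ d)
    (hdd : ∀ y : H₂, d * ‖y‖ ^ 2 ≤
      (inner ℂ y (Ring.inverse ((lam : ℂ) • (1 : H₂ →L[ℂ] H₂) - T22) y) : ℂ).re)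
    (c₁ : ℝ) (hc1 : ∀ x : T12.adjoint.domain,
      c₁ * ‖(x : H₁)‖ ^ 2 ≤ (inner ℂ (x : H₁) (T11 x) : ℂ).re)
    (δ : ℝ) (hδ : δ < d * b ^ 2 + c₁ - lam) :
    (∀ x : T12.adjoint.domain, (x : H₁) ≠ 0 →
      δ * ‖(x : H₁)‖ ^ 2 <
        (inner ℂ (x : H₁) (T11 x) : ℂ).re - lam * ‖(x : H₁)‖ ^ 2 +
        (inner ℂ (T12.adjoint x)
          (Ring.inverse ((lam : ℂ) • (1 : H₂ →L[ℂ] H₂) - T22) (T12.adjoint x)) : ℂ).re) ∧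
    (0 ≤ δ → ∀ (x : T12.adjoint.domain)
      (hm : Ring.inverse (T22 - (lam : ℂ) • (1 : H₂ →L[ℂ] H₂)) (T12.adjoint x) ∈ T12.domain),
      T11 x - (lam : ℂ) • (x : H₁) -
        T12 ⟨Ring.inverse (T22 - (lam : ℂ) • (1 : H₂ →L[ℂ] H₂)) (T12.adjoint x), hm⟩ = 0 →
      (x : H₁) = 0) :=
  stmt_8_general T12 hdense T22 T11 lam b hb hbb d hd hdd c₁ hc1 δ hδ
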